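/- Let P ∈ ℝ^{n×n} be symmetric positive definite and c ∈ ℝⁿ, and let ℓ* := sup { ℓ_{c,P}(β) : β ∈ I_P }. Then E(c,P) ⊆ B(0,1) together with ∂E(c,P) ∩ ∂B(0,1) ≠ ∅ (i.e., there exists x̄ with (x̄−c)ᵀ P (x̄−c) = 1 and x̄ᵀ x̄ = 1, and E(c,P) ⊆ B(0,1)) holds if and only if ℓ* = −1. -/

import Mathlib

open Matrix

noncomputable section

/-- The ellipsoid with center `c` and shape matrix `P`. -/
def Ellipsoid {n : ℕ} (c : Fin n → ℝ) (P : Matrix (Fin n) (Fin n) ℝ) : Set (Fin n → ℝ) :=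
  {x | (x - c) ⬝ᵥ P.mulVec (x - c) ≤ 1}

/-- The closed Euclidean unit ball `B(0,1) = {x | xᵀx ≤ 1}`. -/
def UnitBall (n : ℕ) : Set (Fin n → ℝ) :=
  {x | x ⬝ᵥ x ≤ 1}

open Classical in
/-- The dual function `ℓ_{c,P}(β) = −β − Σ_{i : c̄ᵢ ≠ 0} c̄ᵢ² λᵢβ/(λᵢβ−1)`,
expressed via the eigenvalues `λ` of `P` and the coordinates `c̄ = Vᵀc` of the center
in an orthonormal eigenbasis of `P`. -/
def ellFun {n : ℕ} (lam cbar : Fin n → ℝ) (β : ℝ) : ℝ :=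
  -β - ∑ i ∈ Finset.univ.filter (fun i => cbar i ≠ 0),
    (cbar i) ^ 2 * (lam i * β / (lam i * β - 1))

open Classical in
/-- The domain `I_P` of the dual function: `(1/λ_min, ∞)` if some `i` in the support
of `c̄` achieves `λ_min`, and `[1/λ_min, ∞)` otherwise. -/
def ellDom {n : ℕ} (lam cbar : Fin n → ℝ) (lammin : ℝ) : Set ℝ :=
  if ∃ i, cbar i ≠ 0 ∧ lam i = lammin then Set.Ioi (1 / lammin) else Set.Ici (1 / lammin)

/-!
In the eigenbasis of `P` (coordinates `y = Vᵀx`) the ellipsoid is `∑ λᵢ (yᵢ - c̄ᵢ)² ≤ 1` and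
`xᵀx = ∑ yᵢ²`, so the claim is that `-ℓ*` is the maximum of `∑ yᵢ²` over this ellipsoid and is
attained on its boundary. The bound `∑ yᵢ² ≤ -ℓ(β)` for every `β ∈ I_P` (weak duality) follows by
completing the square in each coordinate. For equality, solve the secular equation
`∑ λᵢ c̄ᵢ² / (λᵢβ - 1)² = 1` on `I_P` by the intermediate value theorem: the left-hand side tends to
`0` at infinity and is at least `1` somewhere in `I_P` when `I_P` is open. The stationary point
`yᵢ = λᵢβc̄ᵢ / (λᵢβ - 1)` of the Lagrangian then lies on the boundary with `∑ yᵢ² = -ℓ(β)`. If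
`I_P` is closed and the secular function is below `1` at `1/λ_min`, take `β = 1/λ_min` and add the
missing mass along an eigenvector of `λ_min` orthogonal to `c̄`.
-/

open Matrix Filter Set Topology

lemma sq_sub_mul_sq_sub_le {y c μ : ℝ} (hμ : 1 ≤ μ) (hc : c ≠ 0 → 1 < μ) :
    y ^ 2 - μ * (y - c) ^ 2 ≤ c ^ 2 * (μ / (μ - 1)) := by
  rcases eq_or_ne c 0 with rfl | hc0
  · nlinarith [sq_nonneg y]
  · have hd : 0 < μ - 1 := sub_pos.mpr (hc hc0)
    rw [mul_div_assoc', le_div_iff₀ hd]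
    nlinarith [sq_nonneg ((μ - 1) * y - μ * c)]

section Diagonal

variable {n : ℕ} {lam cbar : Fin n → ℝ} {lammin β : ℝ}

lemma ellFun_eq_sum (lam cbar : Fin n → ℝ) (β : ℝ) :
    ellFun lam cbar β = -β - ∑ i, cbar i ^ 2 * (lam i * β / (lam i * β - 1)) := by
  rw [ellFun, Finset.sum_filter_of_ne]
  intro i _ h hc
  simp [hc] at h

/-- Weak duality: `ℓ(β)` is minus the maximum over `y` of `∑ yᵢ² - β (∑ λᵢ (yᵢ - c̄ᵢ)² - 1)`. -/
lemma sum_sq_le_neg_ellFun (hβ : 0 ≤ β) (hle : ∀ i, 1 ≤ lam i * β)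
    (hlt : ∀ i, cbar i ≠ 0 → 1 < lam i * β) {y : Fin n → ℝ}
    (hy : ∑ i, lam i * (y i - cbar i) ^ 2 ≤ 1) :
    ∑ i, y i ^ 2 ≤ -ellFun lam cbar β := by
  have key : ∑ i, (y i ^ 2 - lam i * β * (y i - cbar i) ^ 2) ≤
      ∑ i, cbar i ^ 2 * (lam i * β / (lam i * β - 1)) :=
    Finset.sum_le_sum fun i _ => sq_sub_mul_sq_sub_le (hle i) (hlt i)
  have hsplit : ∑ i, (y i ^ 2 - lam i * β * (y i - cbar i) ^ 2) =
      ∑ i, y i ^ 2 - β * ∑ i, lam i * (y i - cbar i) ^ 2 := by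
    rw [Finset.sum_sub_distrib, Finset.mul_sum]
    congr 1
    exact Finset.sum_congr rfl fun i _ => by ring
  rw [ellFun_eq_sum]
  nlinarith

def secular (lam cbar : Fin n → ℝ) (β : ℝ) : ℝ :=
  ∑ i, lam i * cbar i ^ 2 / (lam i * β - 1) ^ 2

/-- The stationary point of `∑ yᵢ² - β ∑ λᵢ (yᵢ - c̄ᵢ)²`. -/
def primalPoint (lam cbar : Fin n → ℝ) (β : ℝ) : Fin n → ℝ :=
  fun i => lam i * β * cbar i / (lam i * β - 1)

lemma primalPoint_sub (hβ : ∀ i, cbar i ≠ 0 → lam i * β ≠ 1) (i : Fin n) :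
    primalPoint lam cbar β i - cbar i = cbar i / (lam i * β - 1) := by
  rcases eq_or_ne (cbar i) 0 with hc | hc
  · simp [primalPoint, hc]
  · have hd : lam i * β - 1 ≠ 0 := sub_ne_zero.mpr (hβ i hc)
    simp only [primalPoint]
    field_simp
    ring

lemma sum_primalPoint_sub_sq (hβ : ∀ i, cbar i ≠ 0 → lam i * β ≠ 1) :
    ∑ i, lam i * (primalPoint lam cbar β i - cbar i) ^ 2 = secular lam cbar β := by
  refine Finset.sum_congr rfl fun i _ => ?_
  rw [primalPoint_sub hβ, div_pow, mul_div_assoc]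

lemma sum_primalPoint_sq (hβ : ∀ i, cbar i ≠ 0 → lam i * β ≠ 1) :
    ∑ i, primalPoint lam cbar β i ^ 2 =
      -ellFun lam cbar β - β + β * secular lam cbar β := by
  have hterm : ∀ i, primalPoint lam cbar β i ^ 2 = cbar i ^ 2 * (lam i * β / (lam i * β - 1)) +
      β * (lam i * cbar i ^ 2 / (lam i * β - 1) ^ 2) := by
    intro i
    rcases eq_or_ne (cbar i) 0 with hc | hc
    · simp [primalPoint, hc]
    · have hd : lam i * β - 1 ≠ 0 := sub_ne_zero.mpr (hβ i hc)
      simp only [primalPoint]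
      field_simp
      ring
  rw [ellFun_eq_sum, secular, Finset.mul_sum, Finset.sum_congr rfl fun i _ => hterm i,
    Finset.sum_add_distrib]
  ring

lemma sum_mul_add_single_sq (w f : Fin n → ℝ) {k : Fin n} (hf : f k = 0) (t : ℝ) :
    ∑ i, w i * (f i + (Pi.single k t : Fin n → ℝ) i) ^ 2 = ∑ i, w i * f i ^ 2 + w k * t ^ 2 := by
  have hterm : ∀ i, w i * (f i + (Pi.single k t : Fin n → ℝ) i) ^ 2 =
      w i * f i ^ 2 + (Pi.single k (w k * t ^ 2) : Fin n → ℝ) i := by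
    intro i
    rcases eq_or_ne i k with rfl | hik
    · simp [hf]
    · simp [hik]
  rw [Finset.sum_congr rfl fun i _ => hterm i, Finset.sum_add_distrib, Finset.sum_pi_single']
  simp

/-- If `secular β < 1`, the missing mass goes on a coordinate `k` with `c̄_k = 0` and `λ_k β = 1`,
where it weighs the same in `∑ yᵢ²` as in `β ∑ λᵢ (yᵢ - c̄ᵢ)²`. -/
lemma exists_sum_sq_eq_neg_ellFun (hβ0 : 0 ≤ β) (hβ : ∀ i, cbar i ≠ 0 → lam i * β ≠ 1)
    (hs : secular lam cbar β = 1 ∨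
      secular lam cbar β ≤ 1 ∧ ∃ k, cbar k = 0 ∧ lam k * β = 1) :
    ∃ y : Fin n → ℝ, ∑ i, lam i * (y i - cbar i) ^ 2 = 1 ∧
      ∑ i, y i ^ 2 = -ellFun lam cbar β := by
  have hsub := sum_primalPoint_sub_sq hβ
  have hsq := sum_primalPoint_sq hβ
  rcases hs with hs | ⟨hs, k, hck, hlk⟩
  · exact ⟨primalPoint lam cbar β, by rw [hsub, hs], by rw [hsq, hs]; ring⟩
  set t := √((1 - secular lam cbar β) * β)
  have ht : t ^ 2 = (1 - secular lam cbar β) * β :=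
    Real.sq_sqrt (mul_nonneg (sub_nonneg.mpr hs) hβ0)
  have hpk : primalPoint lam cbar β k = 0 := by simp [primalPoint, hck]
  refine ⟨primalPoint lam cbar β + Pi.single k t, ?_, ?_⟩
  · have hshift : ∀ i, (primalPoint lam cbar β + Pi.single k t : Fin n → ℝ) i - cbar i =
        (primalPoint lam cbar β i - cbar i) + (Pi.single k t : Fin n → ℝ) i := fun i => by
      simp only [Pi.add_apply]; ring
    simp only [hshift]
    rw [sum_mul_add_single_sq lam _ (by rw [hpk, hck, sub_zero]), hsub, ht]
    linear_combination (1 - secular lam cbar β) * hlk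
  · have := sum_mul_add_single_sq (fun _ => 1) (primalPoint lam cbar β) hpk t
    simp only [one_mul] at this
    simp only [Pi.add_apply]
    rw [this, hsq, ht]
    ring

lemma continuousOn_secular :
    ContinuousOn (secular lam cbar) {β | ∀ i, cbar i ≠ 0 → lam i * β ≠ 1} := by
  refine continuousOn_finsetSum _ fun i _ => ?_
  rcases eq_or_ne (cbar i) 0 with hc | hc
  · simpa [hc] using continuousOn_const
  · refine ContinuousOn.div continuousOn_const (by fun_prop) fun β hβ => ?_
    exact pow_ne_zero _ (sub_ne_zero.mpr (hβ i hc))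

lemma tendsto_secular_atTop (hlam : ∀ i, 0 < lam i) :
    Tendsto (secular lam cbar) atTop (𝓝 0) := by
  unfold secular
  have hterm : ∀ i, Tendsto (fun β => lam i * cbar i ^ 2 / (lam i * β - 1) ^ 2) atTop (𝓝 0) :=
    fun i => tendsto_const_nhds.div_atTop <| (tendsto_pow_atTop two_ne_zero).comp <|
      tendsto_atTop_add_const_right _ (-1) (tendsto_id.const_mul_atTop (hlam i))
  simpa using tendsto_finsetSum (f := fun i β => lam i * cbar i ^ 2 / (lam i * β - 1) ^ 2)
    Finset.univ fun i _ => hterm i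

lemma one_le_secular (hlam : ∀ i, 0 ≤ lam i) {j : Fin n} (hj : cbar j ≠ 0) (hlj : 0 < lam j) :
    1 ≤ secular lam cbar ((1 + |cbar j| * √(lam j)) / lam j) := by
  set β := (1 + |cbar j| * √(lam j)) / lam j
  have hden : lam j * β - 1 = |cbar j| * √(lam j) := by
    simp only [β]; field_simp; ring
  have hj1 : lam j * cbar j ^ 2 / (lam j * β - 1) ^ 2 = 1 := by
    rw [hden, mul_pow, sq_abs, Real.sq_sqrt hlj.le, div_eq_one_iff_eq (by positivity)]
    ring
  calc 1 = lam j * cbar j ^ 2 / (lam j * β - 1) ^ 2 := hj1.symm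
    _ ≤ secular lam cbar β :=
      Finset.single_le_sum (f := fun i => lam i * cbar i ^ 2 / (lam i * β - 1) ^ 2)
        (fun i _ => div_nonneg (mul_nonneg (hlam i) (sq_nonneg _)) (sq_nonneg _))
        (Finset.mem_univ j)

lemma one_le_lammin_mul_of_mem_ellDom (hl : 0 < lammin) (hβ : β ∈ ellDom lam cbar lammin) :
    1 ≤ lammin * β := by
  have h : 1 / lammin ≤ β := by
    rw [ellDom] at hβ
    split_ifs at hβ
    exacts [le_of_lt hβ, hβ]
  rwa [div_le_iff₀' hl] at h

lemma pos_of_mem_ellDom (hl : 0 < lammin) (hβ : β ∈ ellDom lam cbar lammin) : 0 < β :=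
  pos_of_mul_pos_right (one_pos.trans_le (one_le_lammin_mul_of_mem_ellDom hl hβ)) hl.le

lemma mem_ellDom_of_le {β₁ : ℝ} (hβ₁ : β₁ ∈ ellDom lam cbar lammin) (h : β₁ ≤ β) :
    β ∈ ellDom lam cbar lammin := by
  rw [ellDom] at hβ₁ ⊢
  split_ifs at hβ₁ ⊢
  exacts [lt_of_lt_of_le hβ₁ h, le_trans hβ₁ h]

section MinEigenvalue

variable (hl : 0 < lammin) (hmin : ∀ i, lammin ≤ lam i)
include hl hmin

lemma one_le_lam_mul_of_mem_ellDom (hβ : β ∈ ellDom lam cbar lammin) (i : Fin n) :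
    1 ≤ lam i * β :=
  (one_le_lammin_mul_of_mem_ellDom hl hβ).trans
    (mul_le_mul_of_nonneg_right (hmin i) (pos_of_mem_ellDom hl hβ).le)

lemma one_lt_lam_mul_of_mem_ellDom (hβ : β ∈ ellDom lam cbar lammin) {i : Fin n}
    (hc : cbar i ≠ 0) : 1 < lam i * β := by
  rcases (hmin i).lt_or_eq with hlt | heq
  · exact (one_le_lammin_mul_of_mem_ellDom hl hβ).trans_lt
      (mul_lt_mul_of_pos_right hlt (pos_of_mem_ellDom hl hβ))
  · rw [ellDom, if_pos ⟨i, hc, heq.symm⟩, mem_Ioi, div_lt_iff₀' hl] at hβ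
    rwa [← heq]

lemma sum_sq_le_neg_ellFun_of_mem_ellDom (hβ : β ∈ ellDom lam cbar lammin) {y : Fin n → ℝ}
    (hy : ∑ i, lam i * (y i - cbar i) ^ 2 ≤ 1) :
    ∑ i, y i ^ 2 ≤ -ellFun lam cbar β :=
  sum_sq_le_neg_ellFun (pos_of_mem_ellDom hl hβ).le (one_le_lam_mul_of_mem_ellDom hl hmin hβ)
    (fun _ => one_lt_lam_mul_of_mem_ellDom hl hmin hβ) hy

lemma exists_mem_ellDom_one_le_secular_or_slack (hex : ∃ k, lam k = lammin) :
    ∃ β ∈ ellDom lam cbar lammin, 1 ≤ secular lam cbar β ∨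
      secular lam cbar β ≤ 1 ∧ ∃ k, cbar k = 0 ∧ lam k * β = 1 := by
  have hlam : ∀ i, 0 ≤ lam i := fun i => hl.le.trans (hmin i)
  by_cases hsupp : ∃ j, cbar j ≠ 0 ∧ lam j = lammin
  · obtain ⟨j, hj, hlj⟩ := hsupp
    refine ⟨_, ?_, Or.inl (one_le_secular hlam hj (hlj ▸ hl))⟩
    rw [ellDom, if_pos ⟨j, hj, hlj⟩, mem_Ioi, hlj]
    gcongr
    exact lt_add_of_pos_right _ (mul_pos (abs_pos.mpr hj) (Real.sqrt_pos.mpr hl))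
  · obtain ⟨k, hk⟩ := hex
    have hk0 : cbar k = 0 := by
      by_contra h
      exact hsupp ⟨k, h, hk⟩
    refine ⟨1 / lammin, by rw [ellDom, if_neg hsupp]; exact mem_Ici.mpr le_rfl, ?_⟩
    refine (le_or_gt 1 (secular lam cbar (1 / lammin))).imp id fun h => ⟨h.le, k, hk0, ?_⟩
    rw [hk]
    field_simp

lemma exists_mem_ellDom_sum_sq_eq_neg_ellFun (hex : ∃ k, lam k = lammin) :
    ∃ β ∈ ellDom lam cbar lammin, ∃ y : Fin n → ℝ, ∑ i, lam i * (y i - cbar i) ^ 2 = 1 ∧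
      ∑ i, y i ^ 2 = -ellFun lam cbar β := by
  have hreg : ∀ β ∈ ellDom lam cbar lammin, ∀ i, cbar i ≠ 0 → lam i * β ≠ 1 :=
    fun β hβ _ hc => (one_lt_lam_mul_of_mem_ellDom hl hmin hβ hc).ne'
  obtain ⟨β₁, hβ₁, hs₁ | hslack⟩ := exists_mem_ellDom_one_le_secular_or_slack hl hmin hex
  · obtain ⟨β₂, hs₂, hβ₁₂⟩ :=
      (((tendsto_secular_atTop fun i => hl.trans_le (hmin i)).eventually
        (gt_mem_nhds one_pos)).and (eventually_ge_atTop β₁)).exists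
    have hIcc : Icc β₁ β₂ ⊆ ellDom lam cbar lammin := fun β hβ => mem_ellDom_of_le hβ₁ hβ.1
    obtain ⟨β, hβ, hs⟩ := intermediate_value_Icc' hβ₁₂
      (continuousOn_secular.mono fun β hβ => hreg β (hIcc hβ)) ⟨hs₂.le, hs₁⟩
    exact ⟨β, hIcc hβ, exists_sum_sq_eq_neg_ellFun (pos_of_mem_ellDom hl (hIcc hβ)).le
      (hreg β (hIcc hβ)) (Or.inl hs)⟩
  · exact ⟨β₁, hβ₁, exists_sum_sq_eq_neg_ellFun (pos_of_mem_ellDom hl hβ₁).le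
      (hreg β₁ hβ₁) (Or.inr hslack)⟩

theorem exists_isGreatest_image_ellFun (hex : ∃ k, lam k = lammin) :
    ∃ y : Fin n → ℝ, ∑ i, lam i * (y i - cbar i) ^ 2 = 1 ∧
      IsGreatest (ellFun lam cbar '' ellDom lam cbar lammin) (-∑ i, y i ^ 2) := by
  obtain ⟨β₀, hβ₀, y, hy, hyβ₀⟩ := exists_mem_ellDom_sum_sq_eq_neg_ellFun hl hmin hex
  refine ⟨y, hy, ⟨β₀, hβ₀, by rw [hyβ₀, neg_neg]⟩, ?_⟩
  rintro _ ⟨β, hβ, rfl⟩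
  linarith [sum_sq_le_neg_ellFun_of_mem_ellDom hl hmin hβ hy.le]

theorem subset_unitBall_and_touch_iff_sSup_eq (hex : ∃ k, lam k = lammin) :
    ((∀ y : Fin n → ℝ, ∑ i, lam i * (y i - cbar i) ^ 2 ≤ 1 → ∑ i, y i ^ 2 ≤ 1) ∧
        ∃ y : Fin n → ℝ, ∑ i, lam i * (y i - cbar i) ^ 2 = 1 ∧ ∑ i, y i ^ 2 = 1) ↔
      sSup (ellFun lam cbar '' ellDom lam cbar lammin) = -1 := by
  obtain ⟨y₀, hy₀, hgreatest⟩ := exists_isGreatest_image_ellFun hl hmin hex (cbar := cbar)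
  obtain ⟨β₀, hβ₀, hℓ⟩ := hgreatest.1
  have hweak : ∀ y : Fin n → ℝ, ∑ i, lam i * (y i - cbar i) ^ 2 ≤ 1 →
      ∑ i, y i ^ 2 ≤ ∑ i, y₀ i ^ 2 := fun y hy => by
    simpa [hℓ] using sum_sq_le_neg_ellFun_of_mem_ellDom hl hmin hβ₀ hy
  rw [hgreatest.csSup_eq, neg_inj]
  constructor
  · rintro ⟨hsub, y, hy, hy1⟩
    exact le_antisymm (hsub y₀ hy₀.le) (hy1 ▸ hweak y hy.le)
  · intro h
    exact ⟨fun y hy => h ▸ hweak y hy, y₀, hy₀, h⟩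

end MinEigenvalue

end Diagonal

namespace Matrix

variable {m R : Type*} [Fintype m] [DecidableEq m]

lemma dotProduct_mulVec_mul_diagonal_mul_transpose [CommSemiring R] (V : Matrix m m R)
    (d v : m → R) : v ⬝ᵥ (V * diagonal d * Vᵀ) *ᵥ v = ∑ i, d i * (Vᵀ *ᵥ v) i ^ 2 := by
  rw [← mulVec_mulVec, ← mulVec_mulVec, dotProduct_mulVec, ← mulVec_transpose]
  simp only [dotProduct, mulVec_diagonal]
  exact Finset.sum_congr rfl fun i _ => by ring

lemma dotProduct_self_eq_sum_transpose_mulVec_sq [CommSemiring R] {V : Matrix m m R}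
    (hV : V * Vᵀ = 1) (v : m → R) : v ⬝ᵥ v = ∑ i, (Vᵀ *ᵥ v) i ^ 2 := by
  simpa [hV] using dotProduct_mulVec_mul_diagonal_mul_transpose V 1 v

lemma PosDef.pos_of_mul_diagonal_mul_transpose {V : Matrix m m ℝ} {d : m → ℝ} (hV : Vᵀ * V = 1)
    (hP : (V * diagonal d * Vᵀ).PosDef) (i : m) : 0 < d i := by
  have hVx : Vᵀ *ᵥ (V *ᵥ Pi.single i 1) = Pi.single i 1 := by
    rw [mulVec_mulVec, hV, one_mulVec]
  have hx : V *ᵥ Pi.single i 1 ≠ 0 := fun h => by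
    simpa [h] using congrFun hVx i
  have hpos := hP.dotProduct_mulVec_pos hx
  rw [star_trivial, dotProduct_mulVec_mul_diagonal_mul_transpose, hVx] at hpos
  simpa [Pi.single_apply] using hpos

end Matrix

theorem stmt_12 {n : ℕ} (P V D : Matrix (Fin n) (Fin n) ℝ) (lam : Fin n → ℝ)
    (c : Fin n → ℝ) (hP : P.PosDef)
    (hV : Vᵀ * V = 1) (hD : D = Matrix.diagonal lam) (hdec : P = V * D * Vᵀ)
    (lammin : ℝ) (hmin : ∀ i, lammin ≤ lam i) (hex : ∃ i, lam i = lammin) :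
    (Ellipsoid c P ⊆ UnitBall n ∧
        ∃ x : Fin n → ℝ, (x - c) ⬝ᵥ P.mulVec (x - c) = 1 ∧ x ⬝ᵥ x = 1) ↔
      sSup (ellFun lam (Vᵀ.mulVec c) '' ellDom lam (Vᵀ.mulVec c) lammin) = -1 := by
  subst hdec hD
  have hl : 0 < lammin := by
    obtain ⟨k, rfl⟩ := hex
    exact hP.pos_of_mul_diagonal_mul_transpose hV k
  have hquad (x : Fin n → ℝ) : (x - c) ⬝ᵥ (V * diagonal lam * Vᵀ) *ᵥ (x - c) =
      ∑ i, lam i * ((Vᵀ *ᵥ x) i - (Vᵀ *ᵥ c) i) ^ 2 := by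
    rw [dotProduct_mulVec_mul_diagonal_mul_transpose, mulVec_sub]
    rfl
  have hnorm := dotProduct_self_eq_sum_transpose_mulVec_sq (mul_eq_one_comm.mp hV)
  have hsurj : Function.Surjective (Vᵀ *ᵥ · : (Fin n → ℝ) → Fin n → ℝ) :=
    fun y => ⟨V *ᵥ y, by simp [mulVec_mulVec, hV]⟩
  rw [← subset_unitBall_and_touch_iff_sSup_eq hl hmin hex]
  simp only [Ellipsoid, UnitBall, ofPred_subset_ofPred, hquad, hnorm]
  rw [iff_comm, hsurj.forall, hsurj.exists]
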